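/- Let G be a graph and S ⊆ V(G). Let 𝒮 be a finite family of S-stable separations of G, and define X := S ∪ ⋃_{(A,B) ∈ 𝒮} (A ∩ B). Then for every connected component of G − X with vertex set Z, we have |N(Z)| ≤ |S|. -/

import Mathlib

open Finset

variable {V : Type*} [Fintype V] [DecidableEq V]

/-- A separation of a graph: a pair of vertex sets covering all vertices with no edge
between the two strict sides. Its order is `(A ∩ B).card`. -/
def IsSep (G : SimpleGraph V) (A B : Finset V) : Prop :=
  A ∪ B = Finset.univ ∧
    ∀ a ∈ A, a ∉ B → ∀ b ∈ B, b ∉ A → ¬ G.Adj a b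

/-- The `k`-improved graph `G^⟨k⟩`: `x` and `y` are adjacent iff they are distinct and no
separation of `G` of order at most `k` separates them (i.e. `μ_G(x,y) > k`). -/
def ImprovedGraph (G : SimpleGraph V) (k : ℕ) : SimpleGraph V where
  Adj x y := x ≠ y ∧ ∀ A B : Finset V, IsSep G A B → (A ∩ B).card ≤ k →
    ¬ ((x ∈ A ∧ x ∉ B ∧ y ∈ B ∧ y ∉ A) ∨ (y ∈ A ∧ y ∉ B ∧ x ∈ B ∧ x ∉ A))
  symm := by
    constructor
    rintro x y ⟨hxy, h⟩
    exact ⟨hxy.symm, fun A B hs ho hc => h A B hs ho hc.symm⟩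
  loopless := ⟨fun x h => h.1 rfl⟩

/-- `S` is `(q,k)`-unbreakable in `G`: every separation of order at most `k` has at most `q`
vertices of `S` on one of its sides. -/
def UnbreakableSet (G : SimpleGraph V) (S : Finset V) (q k : ℕ) : Prop :=
  ∀ A B : Finset V, IsSep G A B → (A ∩ B).card ≤ k →
    (A ∩ S).card ≤ q ∨ (B ∩ S).card ≤ q

/-- A clique separation: both strict sides nonempty and the separator is a clique. -/
def IsCliqueSep (G : SimpleGraph V) (A B : Finset V) : Prop :=
  IsSep G A B ∧ (A \ B).Nonempty ∧ (B \ A).Nonempty ∧ G.IsClique (↑(A ∩ B) : Set V)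

/-- `y` is reachable from `x` in `G − W`. -/
def AvoidReach (G : SimpleGraph V) (W : Finset V) (x y : V) : Prop :=
  ∃ p : G.Walk x y, ∀ v ∈ p.support, v ∉ W

/-- `W` is an `X`-`Y` separator: no vertex of `Y \ W` is reachable from `X \ W` in `G − W`. -/
def IsSepSet (G : SimpleGraph V) (W X Y : Finset V) : Prop :=
  ∀ x ∈ X, ∀ y ∈ Y, ¬ AvoidReach G W x y

/-- `R_{G−W}(X \ W)`: the set of vertices reachable from `X \ W` in `G − W`. -/
def ReachSet (G : SimpleGraph V) (W X : Finset V) : Set V :=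
  {y | ∃ x ∈ X, AvoidReach G W x y}

/-- An important `X`-`Y` separator. -/
def IsImpSep (G : SimpleGraph V) (X Y W : Finset V) : Prop :=
  IsSepSet G W X Y ∧
  (∀ W' ⊆ W, W' ≠ W → ¬ IsSepSet G W' X Y) ∧
  ∀ W' : Finset V, IsSepSet G W' X Y → W'.card ≤ W.card →
    ¬ (ReachSet G W X ⊂ ReachSet G W' X)

/-- A `k`-important `X`-`Y` separator. -/
def IsKImpSep (G : SimpleGraph V) (k : ℕ) (X Y W : Finset V) : Prop :=
  IsImpSep G X Y W ∧ W.card ≤ k ∧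
  ∀ W' : Finset V, IsImpSep G X Y W' → W'.card ≤ k → W' ≠ W →
    ¬ (ReachSet G W X ⊆ ReachSet G W' X)

/-- The `k`-important separator extension of `D`. -/
def KImpExt (G : SimpleGraph V) (D : Finset V) (k : ℕ) : Set V :=
  {u | (∃ v, v ≠ u ∧ ∃ S : Finset V, IsKImpSep G k {v} D S ∧ u ∈ S) ∨
       (({u} : Finset V).card ≤ k ∧ IsSepSet G {u} {u} D ∧
        ∀ S : Finset V, IsSepSet G S {u} D → S.card ≤ k → S = {u})}

/-- `C` is (the vertex set of) a connected component of `G − A`. -/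
def IsCompAvoiding (G : SimpleGraph V) (A : Set V) (C : Set V) : Prop :=
  ∃ x, x ∉ A ∧ C = {y | ∃ p : G.Walk x y, ∀ v ∈ p.support, v ∉ A}

/-- `C` is (the vertex set of) a connected component of the induced subgraph `G[S]`. -/
def IsCompWithin (G : SimpleGraph V) (S : Set V) (C : Set V) : Prop :=
  ∃ x ∈ S, C = {y | ∃ p : G.Walk x y, ∀ v ∈ p.support, v ∈ S}

/-- The (open) neighborhood of a vertex set `C` in `G`. -/
def nbhdSet (G : SimpleGraph V) (C : Set V) : Set V :=
  {v | v ∉ C ∧ ∃ c ∈ C, G.Adj v c}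

/-- A connectivity-sensitive star decomposition of `G`, given by its central bag and its
set of leaf bags. -/
structure ConnSensStar (G : SimpleGraph V) where
  center : Finset V
  leaves : Finset (Finset V)
  cover : ∀ v : V, v ∈ center ∨ ∃ L ∈ leaves, v ∈ L
  edges : ∀ x y : V, G.Adj x y →
    (x ∈ center ∧ y ∈ center) ∨ ∃ L ∈ leaves, x ∈ L ∧ y ∈ L
  inter : ∀ L ∈ leaves, ∀ L' ∈ leaves, L ≠ L' → ∀ v ∈ L, v ∈ L' → v ∈ center
  adh_distinct : ∀ L ∈ leaves, ∀ L' ∈ leaves, L ∩ center = L' ∩ center → L = L'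
  comp_nbhd : ∀ L ∈ leaves, ∀ C : Set V,
    IsCompWithin G ((↑L : Set V) \ (↑center : Set V)) C → nbhdSet G C = ↑(L ∩ center)

/-- `(A,B)` is an `S`-stable separation of `G`. -/
def IsStableSep (G : SimpleGraph V) (S : Finset V) (A B : Finset V) : Prop :=
  IsSep G A B ∧ ∃ SL SR : Finset V, SL ∪ SR = S ∧ SL ∩ SR = ∅ ∧ SL ⊆ A ∧ SR ⊆ B ∧
    ∀ A' B' : Finset V, IsSep G A' B' → SL ⊆ A' → SR ⊆ B' → (A ∩ B).card ≤ (A' ∩ B').card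

/-- A `Λ`-boundaried graph: a graph together with an injective partial assignment of
labels to (boundary) vertices. -/
structure BGraph (Λ : Type*) (V : Type*) where
  G : SimpleGraph V
  bd : Λ → Option V
  inj : ∀ l l' v, bd l = some v → bd l' = some v → l = l'

/-- `K` (with embeddings `f₁`, `f₂`) is the gluing `H₁ ⊕ H₂` of two boundaried graphs:
vertices of equal label are identified, and an edge is present iff it is present in
(at least) one of the two graphs. -/
def IsGluing {Λ V₁ V₂ W : Type*} (H₁ : BGraph Λ V₁) (H₂ : BGraph Λ V₂)
    (K : SimpleGraph W) (f₁ : V₁ → W) (f₂ : V₂ → W) : Prop :=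
  Function.Injective f₁ ∧ Function.Injective f₂ ∧
  (∀ w : W, (∃ a, f₁ a = w) ∨ (∃ b, f₂ b = w)) ∧
  (∀ a b, f₁ a = f₂ b ↔ ∃ l, H₁.bd l = some a ∧ H₂.bd l = some b) ∧
  (∀ x y : W, K.Adj x y ↔
    (∃ a b, f₁ a = x ∧ f₁ b = y ∧ H₁.G.Adj a b) ∨
    (∃ a b, f₂ a = x ∧ f₂ b = y ∧ H₂.G.Adj a b))

/-- The weak cut signature value of the boundaried graph `H` at `(A', B')` is at most
`n − |A' ∩ B'|`: there is a separation of order at most `n` whose sides contain the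
boundary vertices labeled by `A'` and `B'`, respectively. -/
def WeakSigLE {Λ : Type*} {V : Type*} [Fintype V] [DecidableEq V]
    (H : BGraph Λ V) (A' B' : Finset Λ) (n : ℕ) : Prop :=
  ∃ A B : Finset V, IsSep H.G A B ∧
    (∀ l ∈ A', ∀ v, H.bd l = some v → v ∈ A) ∧
    (∀ l ∈ B', ∀ v, H.bd l = some v → v ∈ B) ∧ (A ∩ B).card ≤ n

/-- Two `Λ`-boundaried graphs have the same weak cut signature. -/
def SameWeakSig {Λ : Type*} [Fintype Λ] [DecidableEq Λ] {V₁ V₂ : Type*}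
    [Fintype V₁] [DecidableEq V₁] [Fintype V₂] [DecidableEq V₂]
    (H₁ : BGraph Λ V₁) (H₂ : BGraph Λ V₂) : Prop :=
  ∀ A' B' : Finset Λ, A' ∪ B' = Finset.univ →
    ∀ n : ℕ, WeakSigLE H₁ A' B' n ↔ WeakSigLE H₂ A' B' n

/-! Orient each separation `(A, B)` of `𝒮` so that `Z`, and with it `N(Z)`, lies in `A`, and
uncross the trivial separation `(V, S)` with these one at a time, ending at
`(⋂ A, S ∪ ⋃ B)`. By submodularity of the order a step `(C, D) ↦ (C ∩ A, D ∪ B)` could only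
raise the order if the other corner `(C ∪ A, D ∩ B)` had smaller order than `(A, B)`; it
separates the same partition of `S`, so stability forbids this. Hence the final separator
has at most `|S|` vertices, and it contains `N(Z) ⊆ X = S ∪ ⋃ (A ∩ B)`. -/

section Separations

variable {G : SimpleGraph V} {A B C D : Finset V}

lemma isSep_univ_left (D : Finset V) : IsSep G univ D :=
  ⟨eq_univ_of_forall fun v => mem_union_left D (mem_univ v),
    fun _ _ _ b _ hb => absurd (mem_univ b) hb⟩

lemma IsSep.symm (h : IsSep G A B) : IsSep G B A :=
  ⟨by rw [union_comm, h.1], fun a ha haA b hb hbB hadj => h.2 b hb hbB a ha haA hadj.symm⟩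

lemma IsSep.mem_or (h : IsSep G A B) (v : V) : v ∈ A ∨ v ∈ B :=
  mem_union.mp (h.1 ▸ mem_univ v)

lemma IsSep.mem_left_of_adj (h : IsSep G A B) {a b : V} (ha : a ∈ A) (haB : a ∉ B)
    (hadj : G.Adj a b) : b ∈ A := by
  by_contra hb
  exact h.2 a ha haB b ((h.mem_or b).resolve_left hb) hb hadj

lemma IsSep.inter_union (hCD : IsSep G C D) (hAB : IsSep G A B) :
    IsSep G (C ∩ A) (D ∪ B) := by
  refine ⟨eq_univ_iff_forall.mpr fun v => ?_, fun a ha haDB b hb hbCA hadj => ?_⟩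
  · have := hCD.mem_or v
    have := hAB.mem_or v
    simp only [mem_union, mem_inter]
    tauto
  · simp only [mem_inter, mem_union, not_or] at ha haDB
    exact hbCA (mem_inter.mpr ⟨hCD.mem_left_of_adj ha.1 haDB.1 hadj,
      hAB.mem_left_of_adj ha.2 haDB.2 hadj⟩)

lemma IsSep.union_inter (hCD : IsSep G C D) (hAB : IsSep G A B) :
    IsSep G (C ∪ A) (D ∩ B) :=
  (hCD.symm.inter_union hAB.symm).symm

lemma IsSep.mem_of_walk (h : IsSep G A B) {x y : V} (p : G.Walk x y)
    (hp : ∀ v ∈ p.support, v ∉ A ∩ B) (hx : x ∈ A) : y ∈ A := by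
  induction p with
  | nil => exact hx
  | cons hadj q ih =>
    rw [SimpleGraph.Walk.support_cons] at hp
    have hxB : _ ∉ B := fun hB => hp _ List.mem_cons_self (mem_inter.mpr ⟨hx, hB⟩)
    exact ih (fun v hv => hp v (List.mem_cons_of_mem _ hv)) (h.mem_left_of_adj hx hxB hadj)

end Separations

lemma card_inter_inter_union_add_card_union_inter_inter_le {α : Type*} [DecidableEq α]
    (A B C D : Finset α) :
    #((C ∩ A) ∩ (D ∪ B)) + #((C ∪ A) ∩ (D ∩ B)) ≤ #(C ∩ D) + #(A ∩ B) := by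
  have hunion : (C ∩ A) ∩ (D ∪ B) ∪ (C ∪ A) ∩ (D ∩ B) ⊆ C ∩ D ∪ A ∩ B := by
    intro v
    simp only [mem_union, mem_inter]
    tauto
  have hinter : (C ∩ A) ∩ (D ∪ B) ∩ ((C ∪ A) ∩ (D ∩ B)) ⊆ C ∩ D ∩ (A ∩ B) := by
    intro v
    simp only [mem_union, mem_inter]
    tauto
  rw [← card_union_add_card_inter, ← card_union_add_card_inter (C ∩ D)]
  exact Nat.add_le_add (card_le_card hunion) (card_le_card hinter)

section Stable

variable {G : SimpleGraph V} {S A B C D : Finset V}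

lemma IsStableSep.symm (h : IsStableSep G S A B) : IsStableSep G S B A := by
  obtain ⟨hAB, SL, SR, hS, hdisj, hSL, hSR, hmin⟩ := h
  refine ⟨hAB.symm, SR, SL, by rw [union_comm, hS], by rw [inter_comm, hdisj], hSR, hSL, ?_⟩
  intro A' B' hA'B' hSRA' hSLB'
  rw [inter_comm B, inter_comm A']
  exact hmin B' A' hA'B'.symm hSLB' hSRA'

lemma IsStableSep.card_inter_union_le (hAB : IsStableSep G S A B) (hCD : IsSep G C D)
    (hSD : S ⊆ D) : #((C ∩ A) ∩ (D ∪ B)) ≤ #(C ∩ D) := by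
  obtain ⟨hAB, SL, SR, hS, -, hSL, hSR, hmin⟩ := hAB
  have hSRD : SR ⊆ D := (subset_union_right.trans hS.le).trans hSD
  have hle : #(A ∩ B) ≤ #((C ∪ A) ∩ (D ∩ B)) :=
    hmin _ _ (hCD.union_inter hAB) (hSL.trans subset_union_right) (subset_inter hSRD hSR)
  have := card_inter_inter_union_add_card_union_inter_inter_le A B C D
  omega

lemma IsSep.inter_inf_union_sup {ι : Type*} (s : Finset ι) {A B : ι → Finset V}
    (hs : ∀ i ∈ s, IsStableSep G S (A i) (B i)) (hCD : IsSep G C D) (hSD : S ⊆ D) :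
    IsSep G (C ∩ s.inf A) (D ∪ s.sup B) ∧ #((C ∩ s.inf A) ∩ (D ∪ s.sup B)) ≤ #(C ∩ D) := by
  induction s using Finset.cons_induction generalizing C D with
  | empty => simpa using hCD
  | cons i s hi ih =>
    have hi' := hs i (mem_cons_self i s)
    obtain ⟨hsep, hcard⟩ := ih (fun j hj => hs j (mem_cons_of_mem hj))
      (hCD.inter_union hi'.1) (hSD.trans subset_union_left)
    rw [inf_cons, sup_cons, inf_eq_inter, sup_eq_union, ← inter_assoc, ← union_assoc]
    exact ⟨hsep, hcard.trans (hi'.card_inter_union_le hCD hSD)⟩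

lemma card_inf_inter_union_sup_le {ι : Type*} (s : Finset ι) {A B : ι → Finset V}
    (hs : ∀ i ∈ s, IsStableSep G S (A i) (B i)) : #(s.inf A ∩ (S ∪ s.sup B)) ≤ #S := by
  simpa using ((isSep_univ_left (G := G) S).inter_inf_union_sup s hs subset_rfl).2

end Stable

lemma IsCompAvoiding.nbhdSet_subset {α : Type*} {G : SimpleGraph α} {X Z : Set α}
    (hZ : IsCompAvoiding G X Z) : nbhdSet G Z ⊆ X := by
  obtain ⟨x, -, rfl⟩ := hZ
  rintro v ⟨hvZ, c, ⟨p, hp⟩, hadj⟩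
  by_contra hvX
  refine hvZ ⟨p.concat hadj.symm, fun u hu => ?_⟩
  rw [SimpleGraph.Walk.support_concat, List.mem_append, List.mem_singleton] at hu
  rcases hu with hu | rfl
  exacts [hp u hu, hvX]

section Components

variable {G : SimpleGraph V} {X Z : Set V}

lemma IsCompAvoiding.nbhdSet_subset_left {A B : Finset V} (hAB : IsSep G A B)
    (hX : ↑(A ∩ B) ⊆ X) {x : V} (hxA : x ∈ A)
    (hZ : Z = {y | ∃ p : G.Walk x y, ∀ v ∈ p.support, v ∉ X}) : nbhdSet G Z ⊆ A := by
  subst hZ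
  rintro v ⟨-, c, ⟨p, hp⟩, hadj⟩
  have hcA : c ∈ A := hAB.mem_of_walk p (fun u hu huAB => hp u hu (hX huAB)) hxA
  have hcB : c ∉ B := fun hcB => hp c p.end_mem_support (hX (mem_inter.mpr ⟨hcA, hcB⟩))
  exact hAB.mem_left_of_adj hcA hcB hadj.symm

lemma IsCompAvoiding.nbhdSet_subset_or (hZ : IsCompAvoiding G X Z) {A B : Finset V}
    (hAB : IsSep G A B) (hX : ↑(A ∩ B) ⊆ X) : nbhdSet G Z ⊆ A ∨ nbhdSet G Z ⊆ B := by
  obtain ⟨x, hx, hZ⟩ := hZ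
  rcases hAB.mem_or x with hxA | hxB
  · exact .inl (nbhdSet_subset_left hAB hX hxA hZ)
  · exact .inr (nbhdSet_subset_left hAB.symm (inter_comm A B ▸ hX) hxB hZ)

lemma IsCompAvoiding.exists_isStableSep_nbhdSet_subset (hZ : IsCompAvoiding G X Z)
    {S A B : Finset V} (hAB : IsStableSep G S A B) (hX : ↑(A ∩ B) ⊆ X) :
    ∃ q : Finset V × Finset V, IsStableSep G S q.1 q.2 ∧ nbhdSet G Z ⊆ q.1 ∧ A ∩ B ⊆ q.2 := by
  rcases hZ.nbhdSet_subset_or hAB.1 hX with h | h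
  exacts [⟨(A, B), hAB, h, inter_subset_right⟩, ⟨(B, A), hAB.symm, h, inter_subset_left⟩]

end Components

/-- if `𝒮` is a finite family of `S`-stable separations and
`X = S ∪ ⋃_{(A,B) ∈ 𝒮} (A ∩ B)`, then every connected component `Z` of `G − X`
satisfies `|N(Z)| ≤ |S|`. -/
theorem stable_seps_component_nbhd (G : SimpleGraph V) (S : Finset V)
    (𝒮 : Finset (Finset V × Finset V)) (h𝒮 : ∀ p ∈ 𝒮, IsStableSep G S p.1 p.2)
    (Z : Set V)
    (hZ : IsCompAvoiding G (↑(S ∪ 𝒮.sup fun p => p.1 ∩ p.2) : Set V) Z) :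
    (nbhdSet G Z).ncard ≤ S.card := by
  classical
  have hX : ∀ p ∈ 𝒮, p.1 ∩ p.2 ⊆ S ∪ 𝒮.sup fun p => p.1 ∩ p.2 := fun p hp =>
    (le_sup (f := fun p => p.1 ∩ p.2) hp).trans subset_union_right
  choose! o ho using fun p hp =>
    hZ.exists_isStableSep_nbhdSet_subset (h𝒮 p hp) (coe_subset.mpr (hX p hp))
  have hN : (nbhdSet G Z).toFinset ⊆ 𝒮.inf (o · |>.1) ∩ (S ∪ 𝒮.sup (o · |>.2)) := by
    refine subset_inter (Finset.le_inf fun p hp => Set.toFinset_subset.mpr (ho p hp).2.1) ?_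
    exact Set.toFinset_subset.mpr <| hZ.nbhdSet_subset.trans <| coe_subset.mpr <|
      union_subset_union subset_rfl (sup_mono_fun fun p hp => (ho p hp).2.2)
  rw [Set.ncard_eq_toFinset_card']
  exact (card_le_card hN).trans (card_inf_inter_union_sup_le 𝒮 fun p hp => (ho p hp).1)
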